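/- Let q be a real number with 0 < q < 1, let h ∈ ℤ, r a positive integer, n a natural number, and x a real number with x > 0, and assume |q^{h-j+1}| < 1 for all 1 ≤ j ≤ r. Then the multiple series \sum_{m_1,...,m_r = 0}^{\infty} (-1)^{m_1+...+m_r} q^{\sum_{j=1}^r (h-j+1) m_j} [m_1+...+m_r+x]_q^n (summed over ℕ^r) and the single series \sum_{m=0}^{\infty} \binom{m+r-1}{m}_q (-q^{h-r+1})^m [m+x]_q^n both converge absolutely, and they are equal. -/

import Mathlib

noncomputable def qnum (q x : ℝ) : ℝ := (1 - q ^ x) / (1 - q)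

/-- Gaussian binomial coefficient via the q-Pascal recurrence. -/
noncomputable def gbinom (q : ℝ) : ℕ → ℕ → ℝ
  | 0, 0 => 1
  | 0, _ + 1 => 0
  | _ + 1, 0 => 1
  | n + 1, k + 1 => gbinom q n k + q ^ (k + 1) * gbinom q n (k + 1)

open Finset

lemma gbinom_succ_succ (q : ℝ) (n k : ℕ) :
    gbinom q (n + 1) (k + 1) = gbinom q n k + q ^ (k + 1) * gbinom q n (k + 1) := by
  rw [gbinom]

lemma gbinom_zero_right (q : ℝ) (n : ℕ) : gbinom q n 0 = 1 := by
  cases n <;> rw [gbinom]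

lemma gbinom_eq_zero (q : ℝ) : ∀ n k, n < k → gbinom q n k = 0
  | 0, k + 1, _ => by rw [gbinom]
  | n + 1, k + 1, h => by
    rw [gbinom_succ_succ, gbinom_eq_zero q n k (by omega), gbinom_eq_zero q n (k + 1) (by omega)]
    ring

lemma gbinom_self (q : ℝ) : ∀ n, gbinom q n n = 1
  | 0 => by rw [gbinom]
  | n + 1 => by
    rw [gbinom_succ_succ, gbinom_self q n, gbinom_eq_zero q n (n + 1) (by omega)]
    ring

lemma gbinom_pascal2 (q : ℝ) :
    ∀ n k, gbinom q (n + 1) (k + 1) = gbinom q n (k + 1) + q ^ (n - k) * gbinom q n k := by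
  intro n
  induction n with
  | zero =>
    intro k
    cases k with
    | zero => rw [gbinom_succ_succ]; simp [gbinom]
    | succ k =>
      rw [gbinom_succ_succ, gbinom_eq_zero q 0 (k + 1) (by omega),
        gbinom_eq_zero q 0 (k + 2) (by omega)]
      ring
  | succ n ih =>
    intro k
    cases k with
    | zero =>
      have e1 := gbinom_succ_succ q n 0
      have e2 := ih 0
      rw [gbinom_zero_right] at e1 e2
      have key0 := e1.symm.trans e2
      rw [gbinom_succ_succ q (n + 1) 0, gbinom_zero_right, e2]
      simp only [Nat.sub_zero, pow_one, mul_one] at *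
      linear_combination key0
    | succ k =>
      have hnk : n + 1 - (k + 1) = n - k := by omega
      conv_rhs => rw [gbinom_succ_succ q n (k + 1), gbinom_succ_succ q n k]
      rw [gbinom_succ_succ q (n + 1) (k + 1), ih k, ih (k + 1), hnk]
      rcases le_or_gt (k + 1) n with hk | hk
      · have h2 : q ^ (k + 1 + 1) * q ^ (n - (k + 1)) = q ^ (n - k) * q ^ (k + 1) := by
          rw [← pow_add, ← pow_add]
          congr 1
          omega
        linear_combination gbinom q n (k + 1) * h2
      · rw [gbinom_eq_zero q n (k + 1) hk]
        ring

lemma gbinom_hockey (q : ℝ) (r : ℕ) :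
    ∀ m, (∑ p ∈ antidiagonal m, q ^ ((r + 1) * p.1) * gbinom q (p.2 + r) p.2)
      = gbinom q (m + r + 1) m := by
  intro m
  induction m with
  | zero => simp [gbinom_zero_right]
  | succ m ih =>
    rw [Nat.antidiagonal_succ, Finset.sum_cons, Finset.sum_map]
    have hstep : ∀ p ∈ antidiagonal m,
        q ^ ((r + 1) * ((Function.Embedding.prodMap ⟨Nat.succ, Nat.succ_injective⟩
            (Function.Embedding.refl ℕ)) p).1) *
          gbinom q (((Function.Embedding.prodMap ⟨Nat.succ, Nat.succ_injective⟩
            (Function.Embedding.refl ℕ)) p).2 + r)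
            ((Function.Embedding.prodMap ⟨Nat.succ, Nat.succ_injective⟩
            (Function.Embedding.refl ℕ)) p).2
        = q ^ (r + 1) * (q ^ ((r + 1) * p.1) * gbinom q (p.2 + r) p.2) := by
      intro p _
      simp only [Function.Embedding.coe_prodMap, Function.Embedding.coeFn_mk,
        Function.Embedding.refl_apply, Prod.map_fst, Prod.map_snd]
      rw [Nat.succ_eq_add_one, Nat.mul_add, Nat.mul_one, pow_add]
      ring
    rw [Finset.sum_congr rfl hstep, ← Finset.mul_sum, ih]
    have h2 := gbinom_pascal2 q (m + r + 1) m
    have h3 : m + r + 1 - m = r + 1 := by omega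
    rw [h3] at h2
    rw [show m + 1 + r + 1 = m + r + 1 + 1 from by omega, h2,
      show m + 1 + r = m + r + 1 from by omega]
    simp

lemma sum_antidiagonalTuple_succ {M : Type*} [AddCommMonoid M] (r m : ℕ)
    (F : (Fin (r + 1) → ℕ) → M) :
    ∑ v ∈ Finset.Nat.antidiagonalTuple (r + 1) m, F v
      = ∑ p ∈ antidiagonal m, ∑ w ∈ Finset.Nat.antidiagonalTuple r p.2, F (Fin.cons p.1 w) := by
  refine Eq.trans ?_ (Finset.sum_sigma (antidiagonal m)
    (fun p => Finset.Nat.antidiagonalTuple r p.2) (fun x => F (Fin.cons x.1.1 x.2)))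
  refine Finset.sum_nbij' (fun v => ⟨(v 0, ∑ j : Fin r, v j.succ), Fin.tail v⟩)
    (fun x => Fin.cons x.1.1 x.2) ?_ ?_ ?_ ?_ ?_
  · intro v hv
    rw [Finset.Nat.mem_antidiagonalTuple, Fin.sum_univ_succ] at hv
    exact Finset.mem_sigma.mpr ⟨Finset.HasAntidiagonal.mem_antidiagonal.mpr hv,
      Finset.Nat.mem_antidiagonalTuple.mpr rfl⟩
  · rintro ⟨⟨a, b⟩, w⟩ hx
    rw [Finset.mem_sigma] at hx
    obtain ⟨h1, h2⟩ := hx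
    rw [Finset.HasAntidiagonal.mem_antidiagonal] at h1
    rw [Finset.Nat.mem_antidiagonalTuple] at h2
    dsimp only at h1 h2 ⊢
    rw [Finset.Nat.mem_antidiagonalTuple, Fin.sum_univ_succ]
    simp only [Fin.cons_zero, Fin.cons_succ]
    rw [h2, h1]
  · intro v _
    exact Fin.cons_self_tail v
  · rintro ⟨⟨a, b⟩, w⟩ hx
    rw [Finset.mem_sigma] at hx
    obtain ⟨h1, h2⟩ := hx
    rw [Finset.Nat.mem_antidiagonalTuple] at h2
    dsimp only at h2 ⊢
    simp only [Fin.cons_zero, Fin.cons_succ, Fin.tail_cons]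
    rw [h2]
  · intro v _
    rw [Fin.cons_self_tail v]

lemma key_sum (q : ℝ) :
    ∀ r m, (∑ v ∈ Finset.Nat.antidiagonalTuple (r + 1) m,
        q ^ (∑ j : Fin (r + 1), (r - (j : ℕ)) * v j)) = gbinom q (m + r) m := by
  intro r
  induction r with
  | zero =>
    intro m
    rw [Finset.Nat.antidiagonalTuple_one, Finset.sum_singleton]
    simp [gbinom_self]
  | succ r ih =>
    intro m
    rw [sum_antidiagonalTuple_succ]
    have hstep : ∀ p ∈ antidiagonal m,
        (∑ w ∈ Finset.Nat.antidiagonalTuple (r + 1) p.2,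
          q ^ (∑ j : Fin (r + 1 + 1), (r + 1 - (j : ℕ)) * Fin.cons (α := fun _ => ℕ) p.1 w j))
        = q ^ ((r + 1) * p.1) * gbinom q (p.2 + r) p.2 := by
      intro p _
      have hw : ∀ w ∈ Finset.Nat.antidiagonalTuple (r + 1) p.2,
          q ^ (∑ j : Fin (r + 1 + 1), (r + 1 - (j : ℕ)) * Fin.cons (α := fun _ => ℕ) p.1 w j)
          = q ^ ((r + 1) * p.1) * q ^ (∑ j : Fin (r + 1), (r - (j : ℕ)) * w j) := by
        intro w _
        have e : (∑ j : Fin (r + 1 + 1), (r + 1 - (j : ℕ)) * Fin.cons (α := fun _ => ℕ) p.1 w j)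
            = (r + 1) * p.1 + ∑ j : Fin (r + 1), (r - (j : ℕ)) * w j := by
          rw [Fin.sum_univ_succ]
          refine congrArg₂ (· + ·) ?_ ?_
          · simp
          · refine Finset.sum_congr rfl fun j _ => ?_
            rw [Fin.cons_succ]
            congr 1
            simp only [Fin.val_succ]
            omega
        rw [e, pow_add]
      rw [Finset.sum_congr rfl hw, ← Finset.mul_sum, ih p.2]
    rw [Finset.sum_congr rfl hstep, gbinom_hockey q r m,
      show m + (r + 1) = m + r + 1 from by omega]

lemma summable_pi_geom (c : ℝ) (h0 : 0 ≤ c) (h1 : c < 1) :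
    ∀ r, Summable (fun v : Fin r → ℕ => c ^ (∑ j, v j)) := by
  intro r
  induction r with
  | zero => exact (hasSum_fintype _).summable
  | succ r ih =>
    have hs := Summable.mul_of_nonneg (f := fun k : ℕ => c ^ k)
      (g := fun v : Fin r → ℕ => c ^ (∑ j, v j))
      (summable_geometric_of_lt_one h0 h1) ih
      (fun _ => pow_nonneg h0 _) (fun _ => pow_nonneg h0 _)
    refine ((Fin.consEquiv (fun _ : Fin (r + 1) => ℕ)).summable_iff).mp ?_
    refine hs.congr fun p => ?_
    show c ^ p.1 * c ^ (∑ j, p.2 j) = c ^ (∑ j, (Fin.cons p.1 p.2 : Fin (r+1) → ℕ) j)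
    rw [Fin.sum_univ_succ, pow_add]
    simp

theorem multiple_series_eq_single_series (q : ℝ) (hq0 : 0 < q) (hq1 : q < 1)
    (h : ℤ) (r : ℕ) (hr : 0 < r) (hhr : (r : ℤ) ≤ h) (n : ℕ) (x : ℝ) (hx : 0 < x) :
    (∑' m : Fin r → ℕ,
        (-1 : ℝ) ^ (∑ j, m j) * q ^ (∑ j : Fin r, (h - (j : ℕ)) * (m j : ℤ)) *
          (qnum q ((∑ j, m j : ℕ) + x)) ^ n) =
      (∑' m : ℕ, gbinom q (m + r - 1) m * (-(q : ℝ) ^ (h - r + 1)) ^ m *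
          (qnum q ((m : ℝ) + x)) ^ n) ∧
    Summable (fun m : Fin r → ℕ =>
        (-1 : ℝ) ^ (∑ j, m j) * q ^ (∑ j : Fin r, (h - (j : ℕ)) * (m j : ℤ)) *
          (qnum q ((∑ j, m j : ℕ) + x)) ^ n) ∧
    Summable (fun m : ℕ => gbinom q (m + r - 1) m * (-(q : ℝ) ^ (h - r + 1)) ^ m *
          (qnum q ((m : ℝ) + x)) ^ n) := by
  obtain ⟨s, rfl⟩ : ∃ s, r = s + 1 := ⟨r - 1, by omega⟩
  have hq1' : (0 : ℝ) < 1 - q := by linarith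
  have hqne : q ≠ 0 := ne_of_gt hq0
  set f : (Fin (s + 1) → ℕ) → ℝ := fun m =>
    (-1 : ℝ) ^ (∑ j, m j) * q ^ (∑ j : Fin (s + 1), (h - (j : ℕ)) * (m j : ℤ)) *
      (qnum q ((∑ j, m j : ℕ) + x)) ^ n with hfdef
  have hqnum : ∀ y : ℝ, 0 < y → 0 ≤ qnum q y ∧ qnum q y ≤ (1 - q)⁻¹ := by
    intro y hy
    have h1 : q ^ y ≤ 1 := Real.rpow_le_one hq0.le hq1.le hy.le
    have h2 : (0 : ℝ) < q ^ y := Real.rpow_pos_of_pos hq0 y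
    constructor
    · exact div_nonneg (by linarith) (by linarith)
    · rw [qnum, div_eq_mul_inv]
      exact mul_le_of_le_one_left (inv_nonneg.mpr hq1'.le) (by linarith)
  have hfb : ∀ v : Fin (s + 1) → ℕ, ‖f v‖ ≤ (1 - q)⁻¹ ^ n * q ^ (∑ j, v j) := by
    intro v
    have hsum_le : ((∑ j, v j : ℕ) : ℤ) ≤ ∑ j : Fin (s + 1), (h - (j : ℕ)) * (v j : ℤ) := by
      push_cast
      refine Finset.sum_le_sum fun j _ => ?_
      have hj : ((j : ℕ) : ℤ) < (s : ℤ) + 1 := by exact_mod_cast j.isLt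
      have hvj : (0 : ℤ) ≤ (v j : ℤ) := Int.ofNat_nonneg _
      have hh1 : (1 : ℤ) ≤ h - (j : ℕ) := by push_cast at hhr ⊢; omega
      nlinarith
    have hz1 : q ^ (∑ j : Fin (s + 1), (h - (j : ℕ)) * (v j : ℤ))
        ≤ q ^ (((∑ j, v j : ℕ)) : ℤ) :=
      zpow_le_zpow_right_of_le_one₀ hq0 hq1.le hsum_le
    have hz0 : (0 : ℝ) < q ^ (∑ j : Fin (s + 1), (h - (j : ℕ)) * (v j : ℤ)) := zpow_pos hq0 _
    have hy : (0 : ℝ) < ((∑ j, v j : ℕ) : ℝ) + x := by positivity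
    obtain ⟨hA, hB⟩ := hqnum _ hy
    have h3 : (qnum q (((∑ j, v j : ℕ) : ℝ) + x)) ^ n ≤ (1 - q)⁻¹ ^ n := pow_le_pow_left₀ hA hB n
    have h4 : q ^ (((∑ j, v j : ℕ)) : ℤ) = q ^ (∑ j, v j) := zpow_natCast q _
    rw [hfdef]
    simp only []
    rw [Real.norm_eq_abs, abs_mul, abs_mul, abs_pow, abs_pow, abs_neg, abs_one, one_pow, one_mul,
      abs_of_pos hz0, abs_of_nonneg hA, mul_comm ((1 - q)⁻¹ ^ n)]
    exact mul_le_mul (le_trans hz1 (le_of_eq h4)) h3 (pow_nonneg hA n) (by positivity)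
  have hsummable_f : Summable f :=
    Summable.of_norm_bounded ((summable_pi_geom q hq0.le hq1 (s + 1)).mul_left
      ((1 - q)⁻¹ ^ n)) hfb
  have hfib : ∀ m : ℕ, (∑ v ∈ Finset.Nat.antidiagonalTuple (s + 1) m, f v)
      = gbinom q (m + (s + 1) - 1) m * (-(q : ℝ) ^ (h - (s + 1 : ℕ) + 1)) ^ m *
        (qnum q ((m : ℝ) + x)) ^ n := by
    intro m
    have hv : ∀ v ∈ Finset.Nat.antidiagonalTuple (s + 1) m, f v
        = ((-(q : ℝ) ^ (h - (s + 1 : ℕ) + 1)) ^ m * (qnum q ((m : ℝ) + x)) ^ n) *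
          q ^ (∑ j : Fin (s + 1), (s - (j : ℕ)) * v j) := by
      intro v hvm
      rw [Finset.Nat.mem_antidiagonalTuple] at hvm
      have hexp : (∑ j : Fin (s + 1), (h - (j : ℕ)) * (v j : ℤ))
          = (h - (s + 1 : ℕ) + 1) * (m : ℤ) + ((∑ j : Fin (s + 1), (s - (j : ℕ)) * v j : ℕ) : ℤ) := by
        rw [← hvm]
        push_cast
        rw [Finset.mul_sum, ← Finset.sum_add_distrib]
        refine Finset.sum_congr rfl fun j _ => ?_
        have hj : (j : ℕ) ≤ s := by omega
        have hcast : ((s - (j : ℕ) : ℕ) : ℤ) = (s : ℤ) - ((j : ℕ) : ℤ) := by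
          push_cast [Nat.cast_sub hj]
          ring
        rw [hcast]
        ring
      rw [hfdef]
      simp only []
      rw [hvm, hexp, zpow_add₀ hqne, zpow_mul, zpow_natCast, zpow_natCast, neg_pow]
      ring
    rw [Finset.sum_congr rfl hv, ← Finset.mul_sum, key_sum q s m,
      show m + (s + 1) - 1 = m + s from by omega]
    ring
  have hsig : Summable (fun p : Σ m : ℕ, Finset.Nat.antidiagonalTuple (s + 1) m => f p.2) :=
    ((Finset.Nat.sigmaAntidiagonalTupleEquivTuple (s + 1)).summable_iff.mpr hsummable_f).congr
      fun p => rfl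
  have ht2 : ∀ m : ℕ, (∑' w : Finset.Nat.antidiagonalTuple (s + 1) m, f w)
      = ∑ v ∈ Finset.Nat.antidiagonalTuple (s + 1) m, f v := fun m =>
    Finset.tsum_subtype _ f
  have ht1 : ∑' v, f v = ∑' (m : ℕ), ∑' (w : Finset.Nat.antidiagonalTuple (s + 1) m), f w := by
    rw [← Equiv.tsum_eq (Finset.Nat.sigmaAntidiagonalTupleEquivTuple (s + 1)) f]
    exact Summable.tsum_sigma' (fun b => (hasSum_fintype _).summable) hsig
  refine ⟨?_, hsummable_f, ?_⟩
  · rw [ht1]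
    exact tsum_congr fun m => by rw [ht2 m, hfib m]
  · refine hsig.sigma.congr fun m => ?_
    rw [ht2 m, hfib m]
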